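/- arXiv:2510.05493 — 3 statements merged into one kernel-verified Lean document; each statement's English description precedes it below -/
import Mathlib

section
/- Let X be a compact metric space, f : X → X a homeomorphism, F a plaque system with closed plaques that are closed under limits, and suppose f is expansive with respect to F. Let e be an expansivity constant for ε₀, let δ correspond (via shadowing with respect to F) to ε' = min(e,ε₀)/8, and let g be a homeomorphism with sup_x d(f(x),g(x)) ≤ δ. Define H(x) = { y : there exists an (F,ε')-orbit (y_k)_{k∈ℤ} with y₀ = y and d(y_k, gᵏ(x)) ≤ ε' for all k ∈ ℤ }. Then H(x) is nonempty and compact for every x ∈ X. -/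
open Metric

set_option maxHeartbeats 1000000 in
/-- The set-valued map `H` built in the proof of plaque topological stability
is nonempty- and compact-valued. -/
theorem H_nonempty_compact {X : Type*} [MetricSpace X] [CompactSpace X]
    (f g : X ≃ₜ X) (F : X → ℝ → Set X)
    (hmem : ∀ x : X, ∀ ε > (0:ℝ), x ∈ F x ε)
    (hclosed : ∀ (x : X) (ε : ℝ), IsClosed (F x ε))
    (hmono : ∀ (x : X) (ε δ : ℝ), ε ≤ δ → F x ε ⊆ F x δ)
    (hlim : ∀ (e : ℝ) (z y : ℕ → X) (z₀ y₀ : X),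
      Filter.Tendsto z Filter.atTop (nhds z₀) →
      Filter.Tendsto y Filter.atTop (nhds y₀) →
      (∀ n, y n ∈ F (z n) e) → y₀ ∈ F z₀ e)
    (ε₀ e ε' δ : ℝ) (hε₀ : 0 < ε₀) (he : 0 < e) (hδ : 0 < δ)
    -- `e` is an expansivity constant of `f` with respect to `F` for `ε₀`:
    (hexp : ∀ x y : ℤ → X,
      (∀ k : ℤ, f (x k) ∈ F (x (k+1)) e) →
      (∀ k : ℤ, f (y k) ∈ F (y (k+1)) e) →
      (∀ k : ℤ, dist (x k) (y k) ≤ e) →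
      y 0 ∈ F (x 0) ε₀)
    (hε' : ε' = min e ε₀ / 8)
    -- `δ` corresponds to `ε'` via the shadowing property of `f` with respect to `F`:
    (hshad : ∀ x : ℤ → X, (∀ k : ℤ, dist (f (x k)) (x (k+1)) ≤ δ) →
      ∃ y : ℤ → X, (∀ k : ℤ, f (y k) ∈ F (y (k+1)) ε') ∧
        ∀ k : ℤ, dist (y k) (x k) ≤ ε')
    (hg : ∀ x : X, dist (f x) (g x) ≤ δ) :
    ∀ x : X,
      ({y : X | ∃ yk : ℤ → X, (∀ k : ℤ, f (yk k) ∈ F (yk (k+1)) ε') ∧ yk 0 = y ∧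
          ∀ k : ℤ, dist (yk k) ((g.toEquiv ^ k) x) ≤ ε'}).Nonempty ∧
      IsCompact {y : X | ∃ yk : ℤ → X, (∀ k : ℤ, f (yk k) ∈ F (yk (k+1)) ε') ∧ yk 0 = y ∧
          ∀ k : ℤ, dist (yk k) ((g.toEquiv ^ k) x) ≤ ε'} := by

  intro x
  -- the orbit (g^k x) is a δ-pseudo-orbit of f
  have horb : ∀ k : ℤ, (g.toEquiv ^ (k+1)) x = g ((g.toEquiv ^ k) x) := by
    intro k
    have : (g.toEquiv ^ (k+1)) = g.toEquiv * g.toEquiv ^ k := by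
      rw [add_comm, zpow_add, zpow_one]
    rw [this]; rfl
  have hpseudo : ∀ k : ℤ, dist (f ((g.toEquiv ^ k) x)) ((g.toEquiv ^ (k+1)) x) ≤ δ := by
    intro k; rw [horb k]; exact hg _
  -- the set of shadowing orbits, as a subset of ℤ → X
  set S : Set (ℤ → X) := {yk | (∀ k : ℤ, f (yk k) ∈ F (yk (k+1)) ε') ∧
      ∀ k : ℤ, dist (yk k) ((g.toEquiv ^ k) x) ≤ ε'} with hS
  have hHimage : {y : X | ∃ yk : ℤ → X, (∀ k : ℤ, f (yk k) ∈ F (yk (k+1)) ε') ∧ yk 0 = y ∧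
      ∀ k : ℤ, dist (yk k) ((g.toEquiv ^ k) x) ≤ ε'} = (fun yk : ℤ → X => yk 0) '' S := by
    ext y
    constructor
    · rintro ⟨yk, h1, h2, h3⟩; exact ⟨yk, ⟨h1, h3⟩, h2⟩
    · rintro ⟨yk, ⟨h1, h3⟩, h2⟩; exact ⟨yk, h1, h2, h3⟩
  -- the "graph" of F · ε' is closed
  have hC : IsClosed {p : X × X | p.2 ∈ F p.1 ε'} := by
    apply IsSeqClosed.isClosed
    intro u p hu hup
    have h1 : Filter.Tendsto (fun n => (u n).1) Filter.atTop (nhds p.1) :=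
      (continuous_fst.tendsto p).comp hup
    have h2 : Filter.Tendsto (fun n => (u n).2) Filter.atTop (nhds p.2) :=
      (continuous_snd.tendsto p).comp hup
    exact hlim ε' (fun n => (u n).1) (fun n => (u n).2) p.1 p.2 h1 h2 hu
  -- S is closed in the compact product space, hence compact
  have hSclosed : IsClosed S := by
    have h1 : IsClosed {yk : ℤ → X | ∀ k : ℤ, f (yk k) ∈ F (yk (k+1)) ε'} := by
      rw [Set.setOf_forall]
      refine isClosed_iInter fun k => ?_
      have hcont : Continuous (fun yk : ℤ → X => ((yk (k+1), f (yk k)) : X × X)) :=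
        (continuous_apply (k+1)).prodMk (f.continuous.comp (continuous_apply k))
      exact hC.preimage hcont
    have h2 : IsClosed {yk : ℤ → X | ∀ k : ℤ, dist (yk k) ((g.toEquiv ^ k) x) ≤ ε'} := by
      rw [Set.setOf_forall]
      refine isClosed_iInter fun k => ?_
      exact isClosed_le (Continuous.dist (continuous_apply k) continuous_const) continuous_const
    exact h1.inter h2
  have hScompact : IsCompact S := hSclosed.isCompact
  constructor
  · obtain ⟨y, hy1, hy2⟩ := hshad (fun k => (g.toEquiv ^ k) x) hpseudo
    exact ⟨y 0, y, hy1, rfl, hy2⟩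
  · rw [hHimage]
    exact hScompact.image (continuous_apply 0)
end

section
/- Let X be a compact metric space, f : X → X an expansive homeomorphism with the (classical) shadowing property. Then f is topologically stable in Walters' sense: for every ε > 0 there is δ > 0 such that for every homeomorphism g : X → X with d_{C⁰}(f,g) ≤ δ there is a continuous map h : X → X with d_{C⁰}(h, id_X) ≤ ε and f ∘ h = h ∘ g. (This is the specialization of the plaque-stability theorem to the trivial plaque system by points.) -/
/-!
The `g`-orbit of any point `x` is a `δ`-pseudo-orbit of `f`, so shadowing yields a point `h x`
whose `f`-orbit stays `ε`-close to it. Two `f`-orbits within `ε < c / 2` of the same sequence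
coincide by expansivity, so `h x` is unique; hence `f (h x)` and `h (g x)`, which both shadow
the `g`-orbit of `g x`, are equal. By compactness expansivity is uniform: points whose `f`-orbits
stay `c`-close along a fixed finite time window are `η`-close. Since finitely many iterates of `g`
are continuous at `x`, this makes `h` continuous.
-/

open Filter Topology

namespace Equiv.Perm

variable {α : Type*}

theorem zpow_add_one_apply (σ : Perm α) (k : ℤ) (x : α) :
    (σ ^ (k + 1)) x = σ ((σ ^ k) x) := by
  rw [add_comm, zpow_add, zpow_one, mul_apply]

theorem zpow_add_one_apply' (σ : Perm α) (k : ℤ) (x : α) :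
    (σ ^ (k + 1)) x = (σ ^ k) (σ x) := by
  rw [zpow_add_one, mul_apply]

end Equiv.Perm

namespace Homeomorph

variable {X : Type*} [TopologicalSpace X]

theorem toEquiv_zpow (f : X ≃ₜ X) (n : ℤ) : (f ^ n).toEquiv = f.toEquiv ^ n :=
  map_zpow ({ toFun := Homeomorph.toEquiv, map_one' := rfl, map_mul' := fun _ _ => rfl } :
    (X ≃ₜ X) →* Equiv.Perm X) f n

theorem continuous_toEquiv_zpow (f : X ≃ₜ X) (n : ℤ) : Continuous (f.toEquiv ^ n) := by
  rw [← toEquiv_zpow]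
  exact (f ^ n).continuous

end Homeomorph

section Expansive

variable {X : Type*} [MetricSpace X]

def IsExpansiveConstant (f : X ≃ₜ X) (c : ℝ) : Prop :=
  ∀ x y : X, (∀ n : ℤ, dist ((f.toEquiv ^ n) x) ((f.toEquiv ^ n) y) ≤ c) → x = y

variable {f g : X ≃ₜ X} {c ε : ℝ}

theorem IsExpansiveConstant.eq_of_shadow {a b : ℝ} (hexp : IsExpansiveConstant f c)
    (hab : a + b ≤ c) {u : ℤ → X} {z z' : X}
    (hz : ∀ k, dist ((f.toEquiv ^ k) z) (u k) ≤ a)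
    (hz' : ∀ k, dist ((f.toEquiv ^ k) z') (u k) ≤ b) : z = z' :=
  hexp z z' fun n => by
    linarith [dist_triangle_right ((f.toEquiv ^ n) z) ((f.toEquiv ^ n) z') (u n), hz n, hz' n]

theorem IsExpansiveConstant.exists_finset_dist_lt [CompactSpace X]
    (hexp : IsExpansiveConstant f c) {η : ℝ} (hη : 0 < η) :
    ∃ t : Finset ℤ, ∀ x y : X,
      (∀ n ∈ t, dist ((f.toEquiv ^ n) x) ((f.toEquiv ^ n) y) ≤ c) → dist x y < η := by
  let K : Set (X × X) := {p | η ≤ dist p.1 p.2}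
  let U : ℤ → Set (X × X) := fun n =>
    {p | c < dist ((f.toEquiv ^ n) p.1) ((f.toEquiv ^ n) p.2)}
  have hK : IsCompact K := (isClosed_le continuous_const continuous_dist).isCompact
  have hU : ∀ n, IsOpen (U n) := fun n =>
    have := f.continuous_toEquiv_zpow n
    isOpen_lt continuous_const (by fun_prop)
  have hKU : K ⊆ ⋃ n, U n := by
    intro p hp
    have hne : p.1 ≠ p.2 := dist_pos.mp (hη.trans_le hp)
    by_contra hnot
    simp only [Set.mem_iUnion, Set.mem_ofPred_eq, not_exists, not_lt, U] at hnot
    exact hne (hexp p.1 p.2 hnot)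
  obtain ⟨t, ht⟩ := hK.elim_finite_subcover U hU hKU
  refine ⟨t, fun x y hxy => lt_of_not_ge fun hle => ?_⟩
  obtain ⟨n, hn, hlt⟩ := Set.mem_iUnion₂.mp (ht (show (x, y) ∈ K from hle))
  exact (hxy n hn).not_gt hlt

theorem IsExpansiveConstant.semiconj_of_shadow (hexp : IsExpansiveConstant f c) {h : X → X}
    (hh : ∀ x (k : ℤ), dist ((f.toEquiv ^ k) (h x)) ((g.toEquiv ^ k) x) ≤ ε)
    (hε : 2 * ε ≤ c) (x : X) : f (h x) = h (g x) :=
  hexp.eq_of_shadow (a := ε) (b := ε) (by linarith)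
    (u := fun k => (g.toEquiv ^ k) (g x))
    (fun k => by
      rw [← f.coe_toEquiv, ← g.coe_toEquiv, ← Equiv.Perm.zpow_add_one_apply',
        ← Equiv.Perm.zpow_add_one_apply']
      exact hh x (k + 1))
    (hh (g x))

theorem IsExpansiveConstant.continuous_of_shadow [CompactSpace X]
    (hexp : IsExpansiveConstant f c) {h : X → X}
    (hh : ∀ x (k : ℤ), dist ((f.toEquiv ^ k) (h x)) ((g.toEquiv ^ k) x) ≤ ε)
    (hε : 2 * ε < c) : Continuous h := by
  refine continuous_iff_continuousAt.mpr fun x => Metric.tendsto_nhds.mpr fun η hη => ?_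
  obtain ⟨t, ht⟩ := hexp.exists_finset_dist_lt hη
  have hg : ∀ᶠ y in 𝓝 x, ∀ n ∈ t,
      dist ((g.toEquiv ^ n) y) ((g.toEquiv ^ n) x) < c - 2 * ε :=
    (eventually_all_finset t).mpr fun n _ =>
      Metric.tendsto_nhds.mp ((g.continuous_toEquiv_zpow n).tendsto x) _ (by linarith)
  filter_upwards [hg] with y hy
  refine ht _ _ fun n hn => ?_
  calc dist ((f.toEquiv ^ n) (h y)) ((f.toEquiv ^ n) (h x))
      ≤ dist ((f.toEquiv ^ n) (h y)) ((g.toEquiv ^ n) y)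
        + dist ((g.toEquiv ^ n) y) ((g.toEquiv ^ n) x)
        + dist ((g.toEquiv ^ n) x) ((f.toEquiv ^ n) (h x)) := dist_triangle4 _ _ _ _
    _ ≤ c := by
      linarith [hh y n, hy n hn, hh x n,
        dist_comm ((g.toEquiv ^ n) x) ((f.toEquiv ^ n) (h x))]

end Expansive

/-- Walters' stability theorem: an expansive homeomorphism with the shadowing
property on a compact metric space is topologically stable. -/
theorem walters_stability {X : Type*} [MetricSpace X] [CompactSpace X]
    (f : X ≃ₜ X)
    (hexp : ∃ c > (0:ℝ), ∀ x y : X,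
      (∀ n : ℤ, dist ((f.toEquiv ^ n) x) ((f.toEquiv ^ n) y) ≤ c) → x = y)
    (hshad : ∀ ε > (0:ℝ), ∃ δ > (0:ℝ), ∀ x : ℤ → X,
      (∀ k : ℤ, dist (f (x k)) (x (k+1)) ≤ δ) →
      ∃ z : X, ∀ k : ℤ, dist ((f.toEquiv ^ k) z) (x k) ≤ ε) :
    ∀ ε > (0:ℝ), ∃ δ > (0:ℝ), ∀ g : X ≃ₜ X,
      (∀ x : X, dist (f x) (g x) ≤ δ) →
      ∃ h : X → X, Continuous h ∧ (∀ x : X, dist (h x) x ≤ ε) ∧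
        ∀ x : X, f (h x) = h (g x) := by
  obtain ⟨c, hc, hexp⟩ : ∃ c > 0, IsExpansiveConstant f c := hexp
  intro ε hε
  obtain ⟨δ, hδ, hδshad⟩ := hshad (min ε (c / 3)) (lt_min hε (by linarith))
  have hεc : 2 * min ε (c / 3) < c := by linarith [min_le_right ε (c / 3)]
  refine ⟨δ, hδ, fun g hg => ?_⟩
  have horbit : ∀ x, ∃ z,
      ∀ k : ℤ, dist ((f.toEquiv ^ k) z) ((g.toEquiv ^ k) x) ≤ min ε (c / 3) :=
    fun x => hδshad (fun k => (g.toEquiv ^ k) x) fun k => by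
      rw [Equiv.Perm.zpow_add_one_apply]
      exact hg _
  choose h hh using horbit
  refine ⟨h, hexp.continuous_of_shadow hh hεc, fun x => ?_, hexp.semiconj_of_shadow hh hεc.le⟩
  simpa using (hh x 0).trans (min_le_left _ _)
end

section
/- Let X be a compact metric space, f : X → X a homeomorphism preserving an equivalence relation L (leaves) with plaque system F_ε(x) ⊆ L(x). Suppose (x_i)_{i∈ℤ} is obtained by periodically extending an (F,δ)-chain x₀,…,x_r from x to x (x_r = x₀, f(x_i) within δ of F_δ(x_{i+1})), and suppose (y_k)_{k∈ℤ} is an (F,ε')-orbit ε'-shadowing (x_k). If the shifted sequence z_k = y_{k+r} satisfies d(y_k, z_k) ≤ 2ε' < e for all k, where e is an expansivity constant of f with respect to F for ε₀, then y₀ ∈ F_{ε₀}(y_r); moreover, since f(y_k) ∈ F_e(y_{k+1}) ⊆ L(y_{k+1}) and f maps leaves to leaves, L(f^r(y₀)) = L(y_r) = L(y₀), i.e. y₀ is F-periodic with period r. -/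
open Metric

/-- Key step of the proof that `CR^F(f) ⊆ closure(Per^F(f))`: a plaque orbit
shadowing a periodically extended `(F,δ)`-chain and staying `2ε' < e` close to
its `r`-shift satisfies `y₀ ∈ F_{ε₀}(y_r)` and is `F`-periodic with period `r`. -/
theorem key_step_periodic {X : Type*} [MetricSpace X] [CompactSpace X]
    (f : X ≃ₜ X) (L : X → Set X) (F : X → ℝ → Set X)
    (hLmem : ∀ x : X, x ∈ L x)
    (hLeq : ∀ x y : X, y ∈ L x → L y = L x)
    (hLf : ∀ x : X, f '' L x = L (f x))
    (hFL : ∀ (x : X) (ε : ℝ), F x ε ⊆ L x)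
    (hmem : ∀ x : X, ∀ ε > (0:ℝ), x ∈ F x ε)
    (hmono : ∀ (x : X) (ε δ : ℝ), ε ≤ δ → F x ε ⊆ F x δ)
    (ε₀ e ε' δ : ℝ) (hε₀ : 0 < ε₀) (he : 0 < e) (hε'pos : 0 < ε') (hδ : 0 < δ)
    -- `e` is an expansivity constant of `f` with respect to `F` for `ε₀`:
    (hexp : ∀ x y : ℤ → X,
      (∀ k : ℤ, f (x k) ∈ F (x (k+1)) e) →
      (∀ k : ℤ, f (y k) ∈ F (y (k+1)) e) →
      (∀ k : ℤ, dist (x k) (y k) ≤ e) →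
      y 0 ∈ F (x 0) ε₀)
    (r : ℕ) (hr : 1 ≤ r)
    -- `x` is the periodic extension of an `(F,δ)`-chain from `x 0` to itself:
    (x : ℤ → X)
    (hxper : ∀ k : ℤ, x (k + r) = x k)
    (hxchain : ∀ k : ℤ, infDist (f (x k)) (F (x (k+1)) δ) ≤ δ)
    -- `y` is an `(F,ε')`-orbit `ε'`-shadowing `x`:
    (y : ℤ → X)
    (hyorb : ∀ k : ℤ, f (y k) ∈ F (y (k+1)) ε')
    (hyshad : ∀ k : ℤ, dist (y k) (x k) ≤ ε')
    -- the shifted sequence `z k = y (k+r)` satisfies `d(y k, z k) ≤ 2ε' < e`: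
    (hclose : ∀ k : ℤ, dist (y k) (y (k + r)) ≤ 2 * ε')
    (h2e : 2 * ε' < e) :
    y 0 ∈ F (y r) ε₀ ∧ L ((f.toEquiv ^ r) (y 0)) = L (y 0) := by

  have hε'e : ε' ≤ e := by nlinarith
  have hyorbe : ∀ k : ℤ, f (y k) ∈ F (y (k+1)) e :=
    fun k => hmono _ _ _ hε'e (hyorb k)
  have h1 : y 0 ∈ F (y r) ε₀ := by
    have := hexp (fun k => y (k + r)) y
      (fun k => by
        have := hyorbe (k + r)
        simpa [add_right_comm] using this)
      hyorbe
      (fun k => by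
        have := hclose k
        rw [dist_comm] at this
        linarith)
    simpa using this
  refine ⟨h1, ?_⟩
  have key : ∀ k : ℕ, L ((f.toEquiv ^ k) (y 0)) = L (y k) := by
    intro k
    induction k with
    | zero => simp
    | succ n ih =>
      have hmemn : (f.toEquiv ^ n) (y 0) ∈ L (y n) := ih ▸ hLmem _
      have h2 : f ((f.toEquiv ^ n) (y 0)) ∈ L (f (y n)) := by
        rw [← hLf]; exact ⟨_, hmemn, rfl⟩
      have h3 : L (f (y n)) = L (y (n + 1)) :=
        hLeq _ _ (hFL _ _ (hyorb n))
      have h4 : f ((f.toEquiv ^ n) (y 0)) ∈ L (y (n+1)) := h3 ▸ h2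
      have h5 : (f.toEquiv ^ (n+1)) (y 0) = f ((f.toEquiv ^ n) (y 0)) := by
        rw [pow_succ']
        rfl
      rw [h5, hLeq _ _ h4]
      norm_cast
  have h6 : L (y 0) = L (y r) := hLeq _ _ (hFL _ _ h1)
  rw [key r, ← h6]
end
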